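/- arXiv:math/9207215 — 8 statements merged into one kernel-verified Lean document; each statement's English description precedes it below -/
import Mathlib

section
/- Let G be a finite group and H, K subgroups. Then H and K are almost conjugate if and only if the permutation representations of G on the coset spaces G/H and G/K have equal characters (equivalently, the complex permutation representations ℂ[G/H] and ℂ[G/K] are isomorphic as G-representations). -/
def AlmostConjugate {G : Type*} [Group G] (H K : Subgroup G) : Prop :=
  ∃ f : H ≃ K, ∀ h : H, IsConj (h : G) ((f h : K) : G)

/-! Count `{x ∈ G | x⁻¹ g x ∈ H}` in two ways: fibred over `G ⧸ H` it has `|H|` times as many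
elements as there are cosets fixed by `g`; fibred along `x ↦ x⁻¹ g x` it has `|C_G(g)|` times as
many elements as there are elements of `H` conjugate to `g`. Both almost conjugacy and equality of
the characters (at `g = 1`) force `|H| = |K|`, so equal characters amount to `H` and `K` meeting
every conjugacy class in equally many elements, which is almost conjugacy. -/

open MulAction

namespace MulAction

variable {α β : Type*} [Group α] [MulAction α β]

theorem orbitProdStabilizerEquivGroup_smul (b : β) (x : orbit α b × stabilizer α b) :
    orbitProdStabilizerEquivGroup α b x • b = x.1 := by
  have hmk : ((orbitProdStabilizerEquivGroup α b x : α) : α ⧸ stabilizer α b) =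
      orbitEquivQuotientStabilizer α b x.1 :=
    congrArg Prod.fst (Subgroup.groupEquivQuotientProdSubgroup.apply_symm_apply _)
  rw [← orbitEquivQuotientStabilizer_symm_apply, hmk, Equiv.symm_apply_apply]

theorem card_subtype_smul (b : β) (p : β → Prop) :
    Nat.card {a : α // p (a • b)} =
      Nat.card {c : orbit α b // p c} * Nat.card (stabilizer α b) := by
  rw [← Nat.card_prod]
  refine Nat.card_congr ((Equiv.subtypeEquiv (orbitProdStabilizerEquivGroup α b).symm ?_).trans
    Equiv.prodSubtypeFstEquivSubtypeProd)
  intro a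
  conv_lhs => rw [← (orbitProdStabilizerEquivGroup α b).apply_symm_apply a]
  rw [orbitProdStabilizerEquivGroup_smul]

end MulAction

section Subgroup

variable {G : Type*} [Group G]

theorem QuotientGroup.card_subtype_mk (H : Subgroup G) (p : G ⧸ H → Prop) :
    Nat.card {x : G // p x} = Nat.card {q : G ⧸ H // p q} * Nat.card H := by
  rw [← Nat.card_prod]
  exact Nat.card_congr ((Equiv.subtypeEquiv Subgroup.groupEquivQuotientProdSubgroup
    fun _ => Iff.rfl).trans Equiv.prodSubtypeFstEquivSubtypeProd)

theorem QuotientGroup.smul_mk_eq_mk_iff (H : Subgroup G) (g x : G) :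
    g • (x : G ⧸ H) = x ↔ x⁻¹ * g * x ∈ H := by
  rw [MulAction.Quotient.smul_mk, eq_comm, QuotientGroup.eq, smul_eq_mul, mul_assoc]

theorem card_fixedBy_quotient_mul_card (H : Subgroup G) (g : G) :
    Nat.card {q : G ⧸ H // g • q = q} * Nat.card H =
      Nat.card {h : H // IsConj (h : G) g} * Nat.card (stabilizer (ConjAct G) g) := by
  have hconj : Nat.card {x : G // g • (x : G ⧸ H) = x} =
      Nat.card {a : ConjAct G // a • g ∈ H} :=
    Nat.card_congr <| Equiv.subtypeEquiv ((Equiv.inv G).trans ConjAct.toConjAct.toEquiv)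
      fun x => by rw [QuotientGroup.smul_mk_eq_mk_iff]; simp [ConjAct.smul_def]
  have horbit : {c : orbit (ConjAct G) g // (c : G) ∈ H} ≃ {h : H // IsConj (h : G) g} :=
    { toFun c := ⟨⟨c, c.2⟩, ConjAct.mem_orbit_conjAct.1 c.1.2⟩
      invFun h := ⟨⟨h, ConjAct.mem_orbit_conjAct.2 h.2⟩, h.1.2⟩ }
  rw [← QuotientGroup.card_subtype_mk H (fun q => g • q = q), hconj,
    MulAction.card_subtype_smul g (· ∈ H), Nat.card_congr horbit]

theorem AlmostConjugate.card_eq {H K : Subgroup G} (hHK : AlmostConjugate H K) :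
    Nat.card H = Nat.card K :=
  let ⟨f, _⟩ := hHK
  Nat.card_congr f

theorem almostConjugate_iff_card_isConj {H K : Subgroup G} [Finite H] [Finite K] :
    AlmostConjugate H K ↔
      ∀ g : G, Nat.card {h : H // IsConj (h : G) g} = Nat.card {k : K // IsConj (k : G) g} := by
  constructor
  · rintro ⟨f, hf⟩ g
    exact Nat.card_congr <| f.subtypeEquiv fun h => ⟨(hf h).symm.trans, (hf h).trans⟩
  · intro hcard
    have hfiber (c : ConjClasses G) : Nonempty
        ({h : H // ConjClasses.mk (h : G) = c} ≃ {k : K // ConjClasses.mk (k : G) = c}) := by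
      obtain ⟨g, rfl⟩ := ConjClasses.mk_surjective c
      simpa only [ConjClasses.mk_eq_mk_iff_isConj, Finite.card_eq] using hcard g
    refine ⟨Equiv.ofFiberEquiv fun c => (hfiber c).some, fun h => ?_⟩
    exact ConjClasses.mk_eq_mk_iff_isConj.1
      (Equiv.ofFiberEquiv_map (fun c => (hfiber c).some) h).symm

end Subgroup

/-- H and K are almost conjugate iff the permutation representations of G on
G/H and G/K have equal characters, i.e. each g ∈ G fixes the same number of
cosets in G/H as in G/K. -/
theorem almostConjugate_iff_permChar_eq
    {G : Type*} [Group G] [Finite G] (H K : Subgroup G) :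
    AlmostConjugate H K ↔
      ∀ g : G, Nat.card {x : G ⧸ H // g • x = x}
        = Nat.card {x : G ⧸ K // g • x = x} := by
  have key := card_fixedBy_quotient_mul_card (G := G)
  have : Finite (ConjAct G) := ‹Finite G›
  constructor
  · intro hHK g
    refine Nat.eq_of_mul_eq_mul_right (Nat.card_pos (α := H)) ?_
    rw [key, almostConjugate_iff_card_isConj.1 hHK g, hHK.card_eq, key]
  · intro hchar
    have hindex : H.index = K.index := by
      simpa only [one_smul, Nat.card_subtype_true, ← Subgroup.index_eq_card] using hchar 1
    have hcard : Nat.card H = Nat.card K :=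
      Nat.eq_of_mul_eq_mul_left (Nat.pos_of_ne_zero H.index_ne_zero_of_finite) <| by
        rw [Subgroup.index_mul_card, hindex, Subgroup.index_mul_card]
    refine almostConjugate_iff_card_isConj.2 fun g =>
      Nat.eq_of_mul_eq_mul_right (Nat.card_pos (α := stabilizer (ConjAct G) g)) ?_
    rw [← key, ← key, hchar, hcard]
end

section
/- Let G be a finite group, H and K subgroups, and suppose the complex permutation representations ℂ[H\G] and ℂ[K\G] are isomorphic as representations of G. Then for any complex G-representation V, the subspaces V^H of H-fixed vectors and V^K of K-fixed vectors have equal dimension. -/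
/-- The right coset space H\G. -/
def RightCosets {G : Type*} [Group G] (H : Subgroup G) :=
  Quotient (QuotientGroup.rightRel H)

/-- G acts on the right coset space H\G by `g • Hx = Hxg⁻¹`. -/
instance {G : Type*} [Group G] (H : Subgroup G) : MulAction G (RightCosets H) where
  smul g := Quotient.map' (fun x => x * g⁻¹) (by
    intro a b hab
    rw [QuotientGroup.rightRel_apply] at hab ⊢
    simpa [mul_assoc] using hab)
  one_smul := by
    rintro ⟨x⟩
    exact Quotient.sound' (by rw [QuotientGroup.rightRel_apply]; group; exact H.one_mem)
  mul_smul := by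
    rintro g g' ⟨x⟩
    exact Quotient.sound' (by rw [QuotientGroup.rightRel_apply]; group; exact H.one_mem)

/-- The submodule of H-fixed vectors of a representation. -/
def fixedSubmodule {k G V : Type*} [CommRing k] [Group G] [AddCommGroup V] [Module k V]
    (ρ : Representation k G V) (H : Subgroup G) : Submodule k V where
  carrier := {v | ∀ h ∈ H, ρ h v = v}
  add_mem' := fun {a b} ha hb h hh => by simp [map_add, ha h hh, hb h hh]
  zero_mem' := fun h hh => map_zero _
  smul_mem' := fun c v hv h hh => by simp [map_smul, hv h hh]

/-! Frobenius reciprocity identifies `V^H` with the space of `G`-equivariant maps `k[H\G] → V`: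
such a map is the linear extension of a `G`-equivariant function `H\G → V`, which is determined by
its value at the coset `H`, and that value can be any `H`-fixed vector. A `G`-isomorphism
`ℂ[H\G] ≅ ℂ[K\G]` therefore induces a linear isomorphism `V^H ≅ V^K`. -/

namespace RightCosets

variable {G : Type*} [Group G] (H : Subgroup G)

def mk (x : G) : RightCosets H := Quotient.mk'' x

lemma mk_surjective : Function.Surjective (mk H) := Quotient.mk''_surjective

lemma mk_eq_mk_iff {x y : G} : mk H x = mk H y ↔ y * x⁻¹ ∈ H :=
  Quotient.eq''.trans QuotientGroup.rightRel_apply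

lemma smul_mk (g x : G) : g • mk H x = mk H (x * g⁻¹) := rfl

def lift {α : Type*} (f : G → α) (hf : ∀ x y, y * x⁻¹ ∈ H → f x = f y) : RightCosets H → α :=
  Quotient.lift f fun x y hxy => hf x y (QuotientGroup.rightRel_apply.mp hxy)

@[simp]
lemma lift_mk {α : Type*} (f : G → α) (hf : ∀ x y, y * x⁻¹ ∈ H → f x = f y) (x : G) :
    lift H f hf (mk H x) = f x := rfl

end RightCosets

namespace Representation

section EquivariantFunctions

variable {k G V : Type*} [CommSemiring k] [Monoid G] [AddCommMonoid V] [Module k V]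
  (ρ : Representation k G V) (X : Type*) [MulAction G X]

def equivariantFunctions : Submodule k (X → V) where
  carrier := {f | ∀ (g : G) (x : X), f (g • x) = ρ g (f x)}
  add_mem' hf hf' g x := by simp [hf g x, hf' g x]
  zero_mem' g x := by simp
  smul_mem' c f hf g x := by simp [hf g x]

noncomputable def ofMulActionIntertwiningMapEquiv :
    (ofMulAction k G X).IntertwiningMap ρ ≃ₗ[k] equivariantFunctions ρ X where
  toFun f := ⟨fun x => f (MonoidAlgebra.single x 1), fun g x => by
    rw [← f.isIntertwining, ofMulAction_single]⟩
  map_add' f f' := rfl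
  map_smul' c f := rfl
  invFun φ := ⟨Finsupp.linearCombination k φ ∘ₗ (MonoidAlgebra.coeffLinearEquiv k).toLinearMap,
    fun g => by
      ext x
      simp [φ.2 g x]⟩
  left_inv f := by
    ext x
    simp
  right_inv φ := by
    ext x
    simp

end EquivariantFunctions


section RightCosets

variable {k G V : Type*} [CommRing k] [Group G] [AddCommGroup V] [Module k V]
  (ρ : Representation k G V) (H : Subgroup G)

def equivariantFunctionsRightCosetsEquiv :
    equivariantFunctions ρ (RightCosets H) ≃ₗ[k] fixedSubmodule ρ H where
  toFun φ := ⟨φ.1 (RightCosets.mk H 1), fun h hh => by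
    rw [← φ.2, RightCosets.smul_mk, one_mul]
    exact congrArg φ.1 ((RightCosets.mk_eq_mk_iff H).mpr (by simpa using hh))⟩
  map_add' φ ψ := rfl
  map_smul' c φ := rfl
  invFun v := ⟨RightCosets.lift H (fun x => ρ x⁻¹ v) fun x y hyx => by
      rw [show y⁻¹ = x⁻¹ * (y * x⁻¹)⁻¹ by group, map_mul, Module.End.mul_apply,
        v.2 _ (inv_mem hyx)],
    fun g c => by
      obtain ⟨x, rfl⟩ := RightCosets.mk_surjective H c
      simp [RightCosets.smul_mk, map_mul]⟩
  left_inv φ := by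
    ext c
    obtain ⟨x, rfl⟩ := RightCosets.mk_surjective H c
    change ρ x⁻¹ (φ.1 (RightCosets.mk H 1)) = _
    rw [← φ.2, RightCosets.smul_mk, inv_inv, one_mul]
  right_inv v := by
    ext
    simp

noncomputable def fixedSubmoduleEquivIntertwiningMap :
    fixedSubmodule ρ H ≃ₗ[k] (ofMulAction k G (RightCosets H)).IntertwiningMap ρ :=
  (equivariantFunctionsRightCosetsEquiv ρ H).symm.trans (ofMulActionIntertwiningMapEquiv ρ _).symm

end RightCosets

def Equiv.intertwiningMapCongrLeft {A G V W U : Type*} [CommSemiring A] [Monoid G]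
    [AddCommMonoid V] [AddCommMonoid W] [AddCommMonoid U] [Module A V] [Module A W] [Module A U]
    {ρ : Representation A G V} {σ : Representation A G W}
    (φ : ρ.Equiv σ) (τ : Representation A G U) :
    σ.IntertwiningMap τ ≃ₗ[A] ρ.IntertwiningMap τ :=
  LinearEquiv.ofLinearMap ((IntertwiningMap.llcomp ρ σ τ).flip φ.toIntertwiningMap)
    ((IntertwiningMap.llcomp σ ρ τ).flip φ.symm.toIntertwiningMap)
    (by ext; simp [← IntertwiningMap.comp_def]) (by ext; simp [← IntertwiningMap.comp_def])

noncomputable def fixedSubmoduleEquivOfEquiv {k G V : Type*} [CommRing k] [Group G]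
    [AddCommGroup V] [Module k V] (ρ : Representation k G V) {H K : Subgroup G}
    (φ : (ofMulAction k G (RightCosets H)).Equiv (ofMulAction k G (RightCosets K))) :
    fixedSubmodule ρ H ≃ₗ[k] fixedSubmodule ρ K :=
  (fixedSubmoduleEquivIntertwiningMap ρ H).trans
    ((φ.symm.intertwiningMapCongrLeft ρ).trans (fixedSubmoduleEquivIntertwiningMap ρ K).symm)

noncomputable def ofMulActionEquivOfCoeff {k G X Y : Type*} [Semiring k] [Monoid G]
    [MulAction G X] [MulAction G Y] (e : (X →₀ k) ≃ₗ[k] (Y →₀ k))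
    (he : ∀ (g : G) (x : X →₀ k),
      e (MonoidAlgebra.coeffLinearEquiv k (ofMulAction k G X g
          ((MonoidAlgebra.coeffLinearEquiv k).symm x)))
        = MonoidAlgebra.coeffLinearEquiv k (ofMulAction k G Y g
          ((MonoidAlgebra.coeffLinearEquiv k).symm (e x)))) :
    (ofMulAction k G X).Equiv (ofMulAction k G Y) :=
  .mk ((MonoidAlgebra.coeffLinearEquiv k).trans (e.trans (MonoidAlgebra.coeffLinearEquiv k).symm))
    fun g => LinearMap.ext fun y => by
      obtain ⟨x, rfl⟩ := (MonoidAlgebra.coeffLinearEquiv k).symm.surjective y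
      simp only [LinearMap.comp_apply, LinearEquiv.coe_coe, LinearEquiv.trans_apply,
        LinearEquiv.apply_symm_apply, he, LinearEquiv.symm_apply_apply]

end Representation

theorem finrank_fixed_eq_of_permRep_iso_general
    {G : Type*} [Group G] (H K : Subgroup G)
    (e : (RightCosets H →₀ ℂ) ≃ₗ[ℂ] (RightCosets K →₀ ℂ))
    (he : ∀ (g : G) (x : RightCosets H →₀ ℂ),
      e (MonoidAlgebra.coeffLinearEquiv ℂ (Representation.ofMulAction ℂ G (RightCosets H) g
          ((MonoidAlgebra.coeffLinearEquiv ℂ).symm x)))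
        = MonoidAlgebra.coeffLinearEquiv ℂ (Representation.ofMulAction ℂ G (RightCosets K) g
          ((MonoidAlgebra.coeffLinearEquiv ℂ).symm (e x))))
    {V : Type*} [AddCommGroup V] [Module ℂ V]
    (ρ : Representation ℂ G V) :
    Module.finrank ℂ (fixedSubmodule ρ H) = Module.finrank ℂ (fixedSubmodule ρ K) :=
  (Representation.fixedSubmoduleEquivOfEquiv ρ
    (Representation.ofMulActionEquivOfCoeff e he)).finrank_eq

/-- If the complex permutation representations ℂ[H\G] and ℂ[K\G] are isomorphic
as G-representations, then every finite-dimensional complex G-representation V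
satisfies dim V^H = dim V^K. -/
theorem finrank_fixed_eq_of_permRep_iso
    {G : Type*} [Group G] [Finite G] (H K : Subgroup G)
    (e : (RightCosets H →₀ ℂ) ≃ₗ[ℂ] (RightCosets K →₀ ℂ))
    (he : ∀ (g : G) (x : RightCosets H →₀ ℂ),
      e (MonoidAlgebra.coeffLinearEquiv ℂ (Representation.ofMulAction ℂ G (RightCosets H) g
          ((MonoidAlgebra.coeffLinearEquiv ℂ).symm x)))
        = MonoidAlgebra.coeffLinearEquiv ℂ (Representation.ofMulAction ℂ G (RightCosets K) g
          ((MonoidAlgebra.coeffLinearEquiv ℂ).symm (e x))))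
    {V : Type*} [AddCommGroup V] [Module ℂ V] [FiniteDimensional ℂ V]
    (ρ : Representation ℂ G V) :
    Module.finrank ℂ (fixedSubmodule ρ H) = Module.finrank ℂ (fixedSubmodule ρ K) :=
  finrank_fixed_eq_of_permRep_iso_general H K e he ρ
end

section
/- Let G be a finite group with almost conjugate subgroups H and K, and let V be a finite-dimensional complex representation of G. Then dim V^H = dim V^K, where V^H denotes the subspace of H-fixed vectors. -/
theorem Representation.character_eq_of_isConj {k G V : Type*} [Field k] [Group G]
    [AddCommGroup V] [Module k V] (ρ : Representation k G V) {a b : G} (h : IsConj a b) :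
    ρ.character a = ρ.character b := by
  obtain ⟨c, hc⟩ := isConj_iff.mp h
  rw [← hc, Representation.char_conj]

theorem fixedSubmodule_eq_invariants_comp_subtype {k G V : Type*} [CommRing k] [Group G]
    [AddCommGroup V] [Module k V] (ρ : Representation k G V) (H : Subgroup G) :
    fixedSubmodule ρ H = Representation.invariants (ρ.comp H.subtype : Representation k H V) := by
  ext v
  exact ⟨fun hv h => hv h.1 h.2, fun hv h hh => hv (⟨h, hh⟩ : H)⟩

theorem finrank_fixedSubmodule_eq_card_inv_mul_sum_character {k G V : Type*} [Field k]
    [Group G] [AddCommGroup V] [Module k V] [FiniteDimensional k V]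
    (ρ : Representation k G V) (H : Subgroup G) [Fintype H] [Invertible (Nat.card H : k)] :
    (Module.finrank k (fixedSubmodule ρ H) : k) =
      (Nat.card H : k)⁻¹ * ∑ h : H, ρ.character h := by
  rw [fixedSubmodule_eq_invariants_comp_subtype,
    ← Representation.card_inv_mul_sum_char_eq_finrank]
  rfl

namespace AlmostConjugate

variable {G : Type*} [Group G] {H K : Subgroup G}

theorem sum_character_eq (hHK : AlmostConjugate H K) {k V : Type*} [Field k]
    [AddCommGroup V] [Module k V] (ρ : Representation k G V) [Fintype H] [Fintype K] :
    ∑ h : H, ρ.character h = ∑ h : K, ρ.character h := by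
  obtain ⟨f, hf⟩ := hHK
  exact Fintype.sum_equiv f _ _ fun h => ρ.character_eq_of_isConj (hf h)

theorem nat_card_eq (hHK : AlmostConjugate H K) : Nat.card H = Nat.card K :=
  let ⟨f, _⟩ := hHK
  Nat.card_congr f

theorem finrank_fixedSubmodule_eq (hHK : AlmostConjugate H K) [Finite H] {k V : Type*}
    [Field k] [CharZero k] [AddCommGroup V] [Module k V] [FiniteDimensional k V]
    (ρ : Representation k G V) :
    Module.finrank k (fixedSubmodule ρ H) = Module.finrank k (fixedSubmodule ρ K) := by
  have : Finite K := Nat.finite_of_card_ne_zero (hHK.nat_card_eq ▸ Nat.card_pos.ne')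
  have : Fintype H := Fintype.ofFinite H
  have : Fintype K := Fintype.ofFinite K
  have : Invertible (Nat.card H : k) := invertibleOfNonzero (Nat.cast_ne_zero.2 Nat.card_pos.ne')
  have : Invertible (Nat.card K : k) := invertibleOfNonzero (Nat.cast_ne_zero.2 Nat.card_pos.ne')
  apply @Nat.cast_injective k
  rw [finrank_fixedSubmodule_eq_card_inv_mul_sum_character,
    finrank_fixedSubmodule_eq_card_inv_mul_sum_character, hHK.nat_card_eq,
    hHK.sum_character_eq]

end AlmostConjugate

/-- For almost conjugate subgroups H, K of a finite group G and any
finite-dimensional complex representation V of G, dim V^H = dim V^K. -/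
theorem finrank_fixed_eq_of_almostConjugate
    {G : Type*} [Group G] [Finite G] (H K : Subgroup G)
    (hHK : AlmostConjugate H K)
    {V : Type*} [AddCommGroup V] [Module ℂ V] [FiniteDimensional ℂ V]
    (ρ : Representation ℂ G V) :
    Module.finrank ℂ (fixedSubmodule ρ H) = Module.finrank ℂ (fixedSubmodule ρ K) :=
  hHK.finrank_fixedSubmodule_eq ρ
end

section
/- Let G be a finite group with almost conjugate subgroups H and K, and let G act by bijections on a finite set X. Then the number of H-orbits on X equals the number of K-orbits on X. -/
open MulAction Pointwise in
lemma card_fixedBy_conj {G : Type*} [Group G] (X : Type*) [MulAction G X]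
    {a b : G} (h : IsConj a b) :
    Nat.card (fixedBy X a) = Nat.card (fixedBy X b) := by
  obtain ⟨g, hg⟩ := h
  have hb : b = (g : G) * a * (g : G)⁻¹ := by
    have hb' : (g : G) * a = b * (g : G) := hg
    rw [eq_mul_inv_iff_mul_eq, hb']
  have : fixedBy X b = (g : G) • fixedBy X a := by
    rw [smul_fixedBy, hb]
  rw [this, Nat.card_coe_set_eq, Nat.card_coe_set_eq,
    ← Set.image_smul, Set.ncard_image_of_injective _ (MulAction.injective _)]

open MulAction in
lemma burnside_nat {G : Type*} [Group G] (H : Subgroup G) [Fintype H]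
    (X : Type*) [Finite X] [MulAction G X] :
    (∑ h : H, Nat.card (fixedBy X ((h : G)))) =
      Nat.card (Quotient (orbitRel H X)) * Nat.card H := by
  classical
  have : Fintype X := Fintype.ofFinite X
  have : Fintype (orbitRel.Quotient H X) := Fintype.ofFinite _
  have key := MulAction.sum_card_fixedBy_eq_card_orbits_mul_card_group H X
  have hfix : ∀ h : H, Nat.card (fixedBy X ((h : G))) = Fintype.card (fixedBy X h) := by
    intro h
    have : fixedBy X ((h : G)) = fixedBy X h := rfl
    rw [this, Nat.card_eq_fintype_card]
  simp only [hfix]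
  rw [key]
  simp [Nat.card_eq_fintype_card, orbitRel.Quotient]

/-- Almost conjugate subgroups have the same number of orbits on any finite G-set. -/
theorem card_orbits_eq_of_almostConjugate
    {G : Type*} [Group G] [Finite G] (H K : Subgroup G) (hHK : AlmostConjugate H K)
    (X : Type*) [Finite X] [MulAction G X] :
    Nat.card (Quotient (MulAction.orbitRel H X))
      = Nat.card (Quotient (MulAction.orbitRel K X)) := by
  classical
  have : Fintype H := Fintype.ofFinite H
  have : Fintype K := Fintype.ofFinite K
  obtain ⟨f, hf⟩ := hHK
  have hcardHK : Nat.card H = Nat.card K := Nat.card_congr f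
  have hsum : (∑ h : H, Nat.card (MulAction.fixedBy X ((h : G)))) =
      ∑ k : K, Nat.card (MulAction.fixedBy X ((k : G))) := by
    rw [← f.sum_comp (fun k : K => Nat.card (MulAction.fixedBy X ((k : G))))]
    exact Finset.sum_congr rfl fun h _ => card_fixedBy_conj X (hf h)
  have h1 := burnside_nat H X
  have h2 := burnside_nat K X
  rw [h1, h2, hcardHK] at hsum
  have hKpos : 0 < Nat.card K := Nat.card_pos
  exact Nat.eq_of_mul_eq_mul_right hKpos hsum
end

section
/- For g ∈ SL(3, F₂), the number of nonzero vectors of F₂³ fixed by g equals the number of 2-dimensional subspaces of F₂³ fixed by g. -/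
open Matrix Module LinearMap

namespace SL3F2Aux

abbrev K := ZMod 2
abbrev V := Fin 3 → ZMod 2

/-- The linear functional given by dot product with `w`. -/
def phi (w : V) : V →ₗ[K] K where
  toFun v := w ⬝ᵥ v
  map_add' x y := by simp [dotProduct_add]
  map_smul' c x := by simp [dotProduct_smul]

lemma phi_apply (w v : V) : phi w v = w ⬝ᵥ v := rfl

lemma phi_single (w : V) (i : Fin 3) : phi w (Pi.single i 1) = w i := by
  simp [phi_apply, dotProduct_single]

lemma phi_eq_zero_iff {w : V} : phi w = 0 ↔ w = 0 := by
  constructor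
  · intro h
    funext i
    have := congrArg (fun f : V →ₗ[K] K => f (Pi.single i 1)) h
    simpa [phi_single] using this
  · rintro rfl
    ext v
    simp [phi_apply]

lemma eq_of_ker_phi_eq {w w' : V} (h : ker (phi w) = ker (phi w')) : w = w' := by
  have key : ∀ a b : K, (a = 0 ↔ b = 0) → a = b := by decide
  funext i
  rw [← phi_single w i, ← phi_single w' i]
  apply key
  have h1 := congrArg (fun S : Submodule K V => Pi.single i (1 : K) ∈ S) h
  simpa [LinearMap.mem_ker] using h1

lemma finrank_V : finrank K V = 3 := by
  simp [Module.finrank_pi]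

lemma finrank_ker_phi {w : V} (hw : w ≠ 0) : finrank K (ker (phi w)) = 2 := by
  have hne : phi w ≠ 0 := fun h => hw (phi_eq_zero_iff.mp h)
  have hsum := LinearMap.finrank_range_add_finrank_ker (phi w)
  rw [finrank_V] at hsum
  have hle : finrank K (range (phi w)) ≤ 1 := by
    simpa using Submodule.finrank_le (range (phi w))
  have hpos : finrank K (range (phi w)) ≠ 0 := by
    rw [Ne, Submodule.finrank_eq_zero, LinearMap.range_eq_bot]
    exact hne
  omega

lemma exists_phi_of_finrank_two {W : Submodule K V} (hW : finrank K W = 2) :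
    ∃ w : V, w ≠ 0 ∧ ker (phi w) = W := by
  have hlt : W < ⊤ := by
    rw [lt_top_iff_ne_top]
    intro h
    rw [h, finrank_top, finrank_V] at hW
    omega
  obtain ⟨f, hf0, hf⟩ := W.exists_dual_map_eq_bot_of_lt_top hlt inferInstance
  set w : V := fun i => f (Pi.single i 1) with hwdef
  have hfw : phi w = f := by
    apply (Pi.basisFun K (Fin 3)).ext
    intro i
    simp [Pi.basisFun_apply, phi_single, hwdef]
  have hwne : w ≠ 0 := by
    intro h
    apply hf0
    rw [← hfw, h]
    exact phi_eq_zero_iff.mpr rfl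
  refine ⟨w, hwne, ?_⟩
  have hle : W ≤ ker f := by
    intro x hx
    rw [LinearMap.mem_ker]
    have : f x ∈ W.map f := Submodule.mem_map_of_mem hx
    rwa [hf, Submodule.mem_bot] at this
  rw [hfw]
  symm
  apply Submodule.eq_of_le_of_finrank_le hle
  rw [hW, ← hfw, finrank_ker_phi hwne]

lemma phi_vecMul (w : V) (A : Matrix (Fin 3) (Fin 3) K) :
    phi (w ᵥ* A) = (phi w).comp A.mulVecLin := by
  apply LinearMap.ext
  intro v
  simp only [phi_apply, LinearMap.coe_comp, Function.comp_apply, Matrix.mulVecLin_apply]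
  exact (Matrix.dotProduct_mulVec w A v).symm

lemma ker_phi_vecMul (w : V) (A : Matrix (Fin 3) (Fin 3) K) :
    ker (phi (w ᵥ* A)) = (ker (phi w)).comap A.mulVecLin := by
  rw [phi_vecMul, LinearMap.ker_comp]

section SL

variable (g : Matrix.SpecialLinearGroup (Fin 3) (ZMod 2))

lemma mulVecLin_bijective :
    Function.Bijective ((g : Matrix (Fin 3) (Fin 3) K).mulVecLin) := by
  have h1 : ((g⁻¹ : Matrix.SpecialLinearGroup (Fin 3) K) : Matrix (Fin 3) (Fin 3) K).mulVecLin ∘ₗ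
      (g : Matrix (Fin 3) (Fin 3) K).mulVecLin = LinearMap.id := by
    rw [← Matrix.mulVecLin_mul]
    have : ((g⁻¹ : Matrix.SpecialLinearGroup (Fin 3) K) : Matrix (Fin 3) (Fin 3) K) *
        (g : Matrix (Fin 3) (Fin 3) K) = 1 := by
      rw [← Matrix.SpecialLinearGroup.coe_mul, inv_mul_cancel,
        Matrix.SpecialLinearGroup.coe_one]
    rw [this, Matrix.mulVecLin_one]
  have h2 : (g : Matrix (Fin 3) (Fin 3) K).mulVecLin ∘ₗ
      ((g⁻¹ : Matrix.SpecialLinearGroup (Fin 3) K) : Matrix (Fin 3) (Fin 3) K).mulVecLin =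
      LinearMap.id := by
    rw [← Matrix.mulVecLin_mul]
    have : (g : Matrix (Fin 3) (Fin 3) K) *
        ((g⁻¹ : Matrix.SpecialLinearGroup (Fin 3) K) : Matrix (Fin 3) (Fin 3) K) = 1 := by
      rw [← Matrix.SpecialLinearGroup.coe_mul, mul_inv_cancel,
        Matrix.SpecialLinearGroup.coe_one]
    rw [this, Matrix.mulVecLin_one]
  constructor
  · exact Function.LeftInverse.injective (g := ((g⁻¹ :
      Matrix.SpecialLinearGroup (Fin 3) K) : Matrix (Fin 3) (Fin 3) K).mulVecLin)
      fun v => congrArg (fun f : V →ₗ[K] V => f v) h1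
  · exact Function.RightInverse.surjective (g := ((g⁻¹ :
      Matrix.SpecialLinearGroup (Fin 3) K) : Matrix (Fin 3) (Fin 3) K).mulVecLin)
      fun v => congrArg (fun f : V →ₗ[K] V => f v) h2

lemma map_eq_iff_comap_eq (W : Submodule K V) :
    W.map (g : Matrix (Fin 3) (Fin 3) K).mulVecLin = W ↔
      W.comap (g : Matrix (Fin 3) (Fin 3) K).mulVecLin = W := by
  obtain ⟨hinj, hsurj⟩ := mulVecLin_bijective g
  constructor
  · intro h
    conv_lhs => rw [← h]
    exact Submodule.comap_map_eq_of_injective hinj W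
  · intro h
    conv_lhs => rw [← h]
    exact Submodule.map_comap_eq_of_surjective hsurj W

lemma map_ker_phi_iff (w : V) :
    (ker (phi w)).map (g : Matrix (Fin 3) (Fin 3) K).mulVecLin = ker (phi w) ↔
      w ᵥ* (g : Matrix (Fin 3) (Fin 3) K) = w := by
  rw [map_eq_iff_comap_eq, ← ker_phi_vecMul]
  exact ⟨fun h => eq_of_ker_phi_eq h, fun h => by rw [h]⟩

/-- The bijection between fixed nonzero covectors and fixed planes. -/
noncomputable def planeEquiv :
    {w : V // w ≠ 0 ∧ w ᵥ* (g : Matrix (Fin 3) (Fin 3) K) = w} ≃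
      {W : Submodule K V // finrank K W = 2 ∧
        W.map (g : Matrix (Fin 3) (Fin 3) K).mulVecLin = W} := by
  apply Equiv.ofBijective
    (fun w => ⟨ker (phi w.1), finrank_ker_phi w.2.1, (map_ker_phi_iff g w.1).mpr w.2.2⟩)
  constructor
  · rintro ⟨w, hw⟩ ⟨w', hw'⟩ h
    exact Subtype.ext (eq_of_ker_phi_eq (congrArg Subtype.val h))
  · rintro ⟨W, hW2, hWfix⟩
    obtain ⟨w, hwne, hker⟩ := exists_phi_of_finrank_two hW2
    exact ⟨⟨w, hwne, (map_ker_phi_iff g w).mp (by rw [hker]; exact hWfix)⟩,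
      Subtype.ext hker⟩

end SL

/-- Counting fixed nonzero vectors of a matrix via the nullity of `M - 1`. -/
lemma card_fixed (M : Matrix (Fin 3) (Fin 3) K) :
    Nat.card {v : V // v ≠ 0 ∧ M *ᵥ v = v} =
      2 ^ finrank K (ker (M - 1).mulVecLin) - 1 := by
  have hmem : ∀ v : V, v ∈ ker (M - 1).mulVecLin ↔ M *ᵥ v = v := by
    intro v
    rw [LinearMap.mem_ker, Matrix.mulVecLin_apply, Matrix.sub_mulVec, Matrix.one_mulVec,
      sub_eq_zero]
  classical
  let S := ker (M - 1).mulVecLin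
  haveI : Fintype S := Fintype.ofFinite _
  have e : {v : V // v ≠ 0 ∧ M *ᵥ v = v} ≃ {x : S // x ≠ 0} :=
    { toFun := fun v => ⟨⟨v.1, (hmem v.1).mpr v.2.2⟩,
        fun h => v.2.1 (congrArg Subtype.val h)⟩
      invFun := fun x => ⟨x.1.1, fun h => x.2 (Subtype.ext h), (hmem x.1.1).mp x.1.2⟩
      left_inv := fun v => rfl
      right_inv := fun x => rfl }
  rw [Nat.card_congr e]
  have hcardS : Nat.card S = 2 ^ finrank K S := by
    rw [Nat.card_eq_fintype_card]
    have := card_eq_pow_finrank (K := K) (V := S)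
    rwa [ZMod.card] at this
  have : Nat.card {x : S // x ≠ 0} = Nat.card S - 1 := by
    rw [Nat.card_eq_fintype_card, Nat.card_eq_fintype_card]
    rw [Fintype.card_subtype_compl (p := fun x : S => x = 0),
      Fintype.card_subtype_eq (0 : S)]
  rw [this, hcardS]

/-- Equal nullities for a matrix and its transpose. -/
lemma finrank_ker_transpose (N : Matrix (Fin 3) (Fin 3) K) :
    finrank K (ker Nᵀ.mulVecLin) = finrank K (ker N.mulVecLin) := by
  have h1 := LinearMap.finrank_range_add_finrank_ker N.mulVecLin
  have h2 := LinearMap.finrank_range_add_finrank_ker Nᵀ.mulVecLin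
  rw [finrank_V] at h1 h2
  have hr : Nᵀ.rank = N.rank := Matrix.rank_transpose N
  unfold Matrix.rank at hr
  omega

end SL3F2Aux

open SL3F2Aux in
/-- Each g ∈ SL(3,F₂) fixes as many nonzero vectors of F₂³ as 2-dimensional
subspaces of F₂³. -/
theorem SL3F2_card_fixed_vectors_eq_card_fixed_planes
    (g : Matrix.SpecialLinearGroup (Fin 3) (ZMod 2)) :
    Nat.card {v : Fin 3 → ZMod 2 //
        v ≠ 0 ∧ Matrix.mulVec (g : Matrix (Fin 3) (Fin 3) (ZMod 2)) v = v}
      = Nat.card {W : Submodule (ZMod 2) (Fin 3 → ZMod 2) //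
          Module.finrank (ZMod 2) W = 2 ∧
          W.map (Matrix.mulVecLin (g : Matrix (Fin 3) (Fin 3) (ZMod 2))) = W} := by
  rw [← Nat.card_congr (planeEquiv g)]
  have hvm : ∀ w : V, (w ᵥ* (g : Matrix (Fin 3) (Fin 3) K) = w) ↔
      ((g : Matrix (Fin 3) (Fin 3) K)ᵀ *ᵥ w = w) := by
    intro w
    rw [Matrix.mulVec_transpose]
  have e : {w : V // w ≠ 0 ∧ w ᵥ* (g : Matrix (Fin 3) (Fin 3) K) = w} ≃
      {w : V // w ≠ 0 ∧ (g : Matrix (Fin 3) (Fin 3) K)ᵀ *ᵥ w = w} :=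
    Equiv.subtypeEquivRight (fun w => by rw [hvm w])
  rw [Nat.card_congr e, card_fixed, card_fixed]
  have : ((g : Matrix (Fin 3) (Fin 3) K)ᵀ - 1) = ((g : Matrix (Fin 3) (Fin 3) K) - 1)ᵀ := by
    rw [Matrix.transpose_sub, Matrix.transpose_one]
  rw [this, finrank_ker_transpose]
end

section
/- Let G be a finite group and H, K ≤ G almost conjugate subgroups. Then for every subgroup L ≤ G, the double coset spaces H\G/L and K\G/L have the same cardinality. -/
/-!
By Burnside's lemma, `|H| · |H\X| = ∑_{h ∈ H} |X^h|` for a finite `G`-set `X`, and `|X^h|` only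
depends on the `G`-conjugacy class of `h`. Hence almost conjugate subgroups have the same number
of orbits on every finite `G`-set, in particular on `G ⧸ L`, whose `H`-orbits are the double
cosets `H\G/L`.
-/

open MulAction

namespace MulAction

theorem card_fixedBy_eq_of_isConj {G X : Type*} [Group G] [MulAction G X] {x y : G}
    (h : IsConj x y) : Nat.card (fixedBy X x) = Nat.card (fixedBy X y) := by
  obtain ⟨c, rfl⟩ := isConj_iff.mp h
  rw [← smul_fixedBy, Set.natCard_smul_set]

theorem card_orbits_mul_card_eq_sum_card_fixedBy (G X : Type*) [Group G] [MulAction G X]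
    [Fintype G] [Finite X] :
    Nat.card (Quotient (orbitRel G X)) * Nat.card G = ∑ g : G, Nat.card (fixedBy X g) := by
  rw [← Nat.card_prod, ← Nat.card_congr (sigmaFixedByEquivOrbitsProdGroup G X), Nat.card_sigma]

end MulAction

theorem AlmostConjugate.card_orbits_eq {G X : Type*} [Group G] [MulAction G X] [Finite X]
    {H K : Subgroup G} [Finite H] (hHK : AlmostConjugate H K) :
    Nat.card (Quotient (orbitRel H X)) = Nat.card (Quotient (orbitRel K X)) := by
  obtain ⟨f, hf⟩ := hHK
  have : Finite K := .of_equiv H f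
  have := Fintype.ofFinite H
  have := Fintype.ofFinite K
  have hsum : ∑ h : H, Nat.card (fixedBy X h) = ∑ k : K, Nat.card (fixedBy X k) :=
    Fintype.sum_equiv f _ _ fun h => card_fixedBy_eq_of_isConj (X := X) (hf h)
  apply Nat.eq_of_mul_eq_mul_right (Nat.card_pos (α := H))
  rw [card_orbits_mul_card_eq_sum_card_fixedBy, hsum, Nat.card_congr f,
    card_orbits_mul_card_eq_sum_card_fixedBy]

namespace DoubleCoset

theorem setoid_eq_ker_orbitRel {G : Type*} [Group G] (H L : Subgroup G) :
    setoid (H : Set G) (L : Set G) =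
      Setoid.ker fun g : G => Quotient.mk (orbitRel H (G ⧸ L)) (g : G ⧸ L) := by
  ext x y
  rw [rel_iff, Setoid.ker_def, Quotient.eq, orbitRel_apply, mem_orbit_iff]
  constructor
  · rintro ⟨a, ha, b, hb, rfl⟩
    exact ⟨⟨a, ha⟩⁻¹, QuotientGroup.eq.mpr (by simpa [mul_assoc] using L.inv_mem hb)⟩
  · rintro ⟨⟨a, ha⟩, hxy⟩
    have hL : (a * y)⁻¹ * x ∈ L := QuotientGroup.eq.mp hxy
    exact ⟨a⁻¹, H.inv_mem ha, _, L.inv_mem hL, by group⟩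

noncomputable def quotientEquivOrbits {G : Type*} [Group G] (H L : Subgroup G) :
    Quotient (H : Set G) (L : Set G) ≃ _root_.Quotient (orbitRel H (G ⧸ L)) :=
  (Quotient.congrRight fun x y => by rw [setoid_eq_ker_orbitRel]).trans <|
    Setoid.quotientKerEquivOfSurjective _ <|
      Quotient.mk_surjective.comp QuotientGroup.mk_surjective

end DoubleCoset

/-- Almost conjugate subgroups H, K of a finite group G give, for every subgroup L,
double coset spaces H\G/L and K\G/L of the same cardinality. -/
theorem card_doubleCosets_eq_of_almostConjugate
    {G : Type*} [Group G] [Finite G] (H K : Subgroup G) (hHK : AlmostConjugate H K)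
    (L : Subgroup G) :
    Nat.card (DoubleCoset.Quotient (H : Set G) (L : Set G))
      = Nat.card (DoubleCoset.Quotient (K : Set G) (L : Set G)) := by
  rw [Nat.card_congr (DoubleCoset.quotientEquivOrbits H L),
    Nat.card_congr (DoubleCoset.quotientEquivOrbits K L)]
  exact hHK.card_orbits_eq
end

section
/- Let G be a finite group with subgroups H and K such that ℂ[G/H] ≅ ℂ[G/K] as G-representations. Then H and K have the same number of elements in each conjugacy class of G; in particular |H| = |K| and H = K whenever H is normal in G. -/
/-!
Taking traces, an isomorphism ℂ[G/H] ≅ ℂ[G/K] says that every `g` fixes as many cosets of `H`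
as of `K`. Counting the `x` with `x⁻¹ g x ∈ H` in two ways (by the coset `xH`, which is then
fixed by `g`, and by the conjugate `x⁻¹ g x`, which is then in the class of `g`) gives
`|H| · |Fix_g(G/H)| = |C_G(g)| · |cl(g) ∩ H|`. For `g = 1` this yields `|G/H| = |G/K|`, hence
`|H| = |K|`, and then the class intersections agree. A normal `H` is a union of classes, and every
class meeting `K` then meets `H`, so `K ≤ H`.
-/

open MulAction

theorem Finsupp.trace_lmapDomain_smul {k G X : Type*} [CommRing k] [Group G] [MulAction G X]
    [Finite X] (g : G) :
    LinearMap.trace k (X →₀ k) (Finsupp.lmapDomain k k (g • · : X → X))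
      = (fixedBy X g).ncard := by
  classical
  have := Fintype.ofFinite X
  rw [LinearMap.trace_eq_matrix_trace k Finsupp.basisSingleOne, Matrix.trace]
  simp [LinearMap.toMatrix_apply, Finsupp.single_apply, Finset.sum_boole,
    Set.ncard_eq_toFinset_card']

theorem ncard_fixedBy_eq_of_linearEquiv {k G X Y : Type*} [CommRing k] [CharZero k] [Group G]
    [MulAction G X] [MulAction G Y] [Finite X] [Finite Y] (e : (X →₀ k) ≃ₗ[k] (Y →₀ k))
    (he : ∀ (g : G) (x : X →₀ k),
      e (Finsupp.lmapDomain k k (g • ·) x) = Finsupp.lmapDomain k k (g • ·) (e x))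
    (g : G) :
    (fixedBy X g).ncard = (fixedBy Y g).ncard := by
  have hconj : e.conj (Finsupp.lmapDomain k k (g • · : X → X))
      = Finsupp.lmapDomain k k (g • · : Y → Y) := by
    refine LinearMap.ext fun y => ?_
    simpa using he g (e.symm y)
  have htrace := LinearMap.trace_conj' (Finsupp.lmapDomain k k (g • · : X → X)) e
  rw [hconj, Finsupp.trace_lmapDomain_smul, Finsupp.trace_lmapDomain_smul] at htrace
  exact_mod_cast htrace.symm

theorem MulAction.card_smul_mem {G X : Type*} [Group G] [MulAction G X] (a : X) (s : Set X) :
    Nat.card {g : G // g • a ∈ s} = Nat.card (stabilizer G a) * (orbit G a ∩ s).ncard := by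
  let t : Set (G ⧸ stabilizer G a) := ofQuotientStabilizer G a ⁻¹' s
  have hrange : Set.range (ofQuotientStabilizer G a) = orbit G a := by
    ext x
    constructor
    · rintro ⟨q, rfl⟩
      induction q using QuotientGroup.induction_on with
      | H g => exact ⟨g, rfl⟩
    · rintro ⟨g, rfl⟩
      exact ⟨g, rfl⟩
  have ht : (orbit G a ∩ s).ncard = Nat.card t := by
    rw [Nat.card_coe_set_eq, ← Set.ncard_image_of_injective t (injective_ofQuotientStabilizer G a),
      Set.image_preimage_eq_range_inter, hrange]
  rw [ht, ← Nat.card_prod, ← Nat.card_congr (QuotientGroup.preimageMkEquivSubgroupProdSet _ t)]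
  rfl

theorem ConjAct.orbit_eq_setOf_isConj {G : Type*} [Group G] (g : G) :
    orbit (ConjAct G) g = {x | IsConj g x} := by
  ext x
  rw [mem_orbit_conjAct, isConj_comm, Set.mem_ofPred_eq]

theorem Subgroup.card_mul_ncard_fixedBy_quotient_eq {G : Type*} [Group G] (H : Subgroup G)
    (g : G) :
    Nat.card H * (fixedBy (G ⧸ H) g).ncard
      = Nat.card (stabilizer (ConjAct G) g) * ({x | IsConj g x} ∩ (H : Set G)).ncard := by
  have hcosets := card_smul_mem (G := G) ((1 : G) : G ⧸ H) (fixedBy (G ⧸ H) g)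
  have hconj := card_smul_mem (G := ConjAct G) g H
  rw [stabilizer_quotient, orbit_eq_univ, Set.univ_inter] at hcosets
  rw [ConjAct.orbit_eq_setOf_isConj] at hconj
  rw [← hcosets, ← hconj]
  refine Nat.card_congr
    (Equiv.subtypeEquiv ((Equiv.inv G).trans ConjAct.toConjAct.toEquiv) fun x => ?_)
  simp only [mem_fixedBy, SetLike.mem_coe, Equiv.trans_apply, Equiv.inv_apply,
    MulEquiv.toEquiv_eq_coe, MulEquiv.coe_toEquiv, MulAction.Quotient.smul_mk, smul_eq_mul, mul_one]
  rw [QuotientGroup.eq, ConjAct.toConjAct_smul, inv_inv, ← H.inv_mem_iff]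
  simp only [mul_inv_rev, inv_inv, mul_assoc]

theorem Subgroup.le_of_ncard_conj_inter_eq {G : Type*} [Group G] [Finite G] {H K : Subgroup G}
    (hH : H.Normal)
    (hHK : ∀ g : G, ({x | IsConj g x} ∩ (H : Set G)).ncard
      = ({x | IsConj g x} ∩ (K : Set G)).ncard) :
    K ≤ H := by
  intro k hk
  have hpos : 0 < ({x | IsConj k x} ∩ (H : Set G)).ncard := by
    rw [hHK, Set.ncard_pos]
    exact ⟨k, IsConj.refl k, hk⟩
  obtain ⟨x, hkx, hx⟩ := Set.nonempty_of_ncard_ne_zero hpos.ne'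
  obtain ⟨c, rfl⟩ := isConj_iff.mp hkx.symm
  simpa using hH.conj_mem _ hx c

/-- If the complex permutation representations ℂ[G/H] and ℂ[G/K] are isomorphic,
then H and K meet each conjugacy class of G in sets of equal size; in particular
|H| = |K|, and H = K whenever H is normal in G. -/
theorem permRep_iso_implies_class_intersections_eq
    {G : Type*} [Group G] [Finite G] (H K : Subgroup G)
    (e : ((G ⧸ H) →₀ ℂ) ≃ₗ[ℂ] ((G ⧸ K) →₀ ℂ))
    (he : ∀ (g : G) (x : (G ⧸ H) →₀ ℂ),
      e (Representation.ofMulAction ℂ G (G ⧸ H) g (MonoidAlgebra.ofCoeff x)).coeff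
        = (Representation.ofMulAction ℂ G (G ⧸ K) g (MonoidAlgebra.ofCoeff (e x))).coeff) :
    (∀ g : G, ({x | IsConj g x} ∩ (H : Set G)).ncard
        = ({x | IsConj g x} ∩ (K : Set G)).ncard) ∧
      Nat.card H = Nat.card K ∧ (H.Normal → H = K) := by
  -- `ofMulAction` is `lmapDomain` transported along `coeffLinearEquiv`, so `he` applies as is.
  have hfix (g : G) : (fixedBy (G ⧸ H) g).ncard = (fixedBy (G ⧸ K) g).ncard :=
    ncard_fixedBy_eq_of_linearEquiv e he g
  have hindex : H.index = K.index := by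
    unfold Subgroup.index
    simpa only [fixedBy_one_eq_univ, Set.ncard_univ] using hfix 1
  have hcard : Nat.card H = Nat.card K :=
    Nat.eq_of_mul_eq_mul_right (Nat.pos_of_ne_zero H.index_ne_zero_of_finite)
      (by rw [H.card_mul_index, hindex, K.card_mul_index])
  have hclass (g : G) : ({x | IsConj g x} ∩ (H : Set G)).ncard
      = ({x | IsConj g x} ∩ (K : Set G)).ncard := by
    have : Finite (ConjAct G) := ‹Finite G›
    refine Nat.eq_of_mul_eq_mul_left (Nat.card_pos (α := stabilizer (ConjAct G) g)) ?_
    rw [← H.card_mul_ncard_fixedBy_quotient_eq, ← K.card_mul_ncard_fixedBy_quotient_eq, hcard,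
      hfix]
  exact ⟨hclass, hcard, fun hH =>
    (Subgroup.eq_of_le_of_card_ge (Subgroup.le_of_ncard_conj_inter_eq hH hclass) hcard.le).symm⟩
end

section
/- Let G be a finite group with almost conjugate subgroups H and K, and let N be a normal subgroup of G contained in both H and K. Then the images H/N and K/N are almost conjugate subgroups of G/N. -/
theorem MonoidHom.card_subtype_comp_eq_card_ker_mul {α β : Type*} [Group α] [Group β]
    {f : α →* β} (hf : Function.Surjective f) (p : β → Prop) :
    Nat.card {a // p (f a)} = Nat.card f.ker * Nat.card {b // p b} :=
  calc Nat.card {a // p (f a)} = Nat.card (Σ b : {b // p b}, {a // f a = b}) :=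
        Nat.card_congr (Equiv.sigmaSubtypeFiberEquivSubtype f fun _ => Iff.rfl).symm
    _ = Nat.card ({b // p b} × f.ker) :=
        Nat.card_congr <|
          (Equiv.sigmaCongrRight fun b : {b // p b} => f.fiberEquivKerOfSurjective hf b).trans
            (Equiv.sigmaEquivProd {b // p b} f.ker)
    _ = Nat.card f.ker * Nat.card {b // p b} := by rw [Nat.card_prod, mul_comm]

theorem Subgroup.card_subtype_mk_eq_card_mul_card_map {G : Type*} [Group G] {N H : Subgroup G}
    [N.Normal] (hNH : N ≤ H) (p : G ⧸ N → Prop) :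
    Nat.card {x : H // p (x : G)} =
      Nat.card N * Nat.card {y : H.map (QuotientGroup.mk' N) // p y} := by
  have hker : Nat.card ((QuotientGroup.mk' N).subgroupMap H).ker = Nat.card N := by
    rw [Subgroup.ker_subgroupMap, QuotientGroup.ker_mk']
    exact Nat.card_congr (Subgroup.subgroupOfEquivOfLe hNH).toEquiv
  rw [← hker]
  exact MonoidHom.card_subtype_comp_eq_card_ker_mul
    (MonoidHom.subgroupMap_surjective (QuotientGroup.mk' N) H) fun y => p y.1

namespace AlmostConjugate

variable {G : Type*} [Group G] {H K : Subgroup G}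

theorem card_subtype_eq (hHK : AlmostConjugate H K) {p : G → Prop}
    (hp : ∀ a b, IsConj a b → (p a ↔ p b)) :
    Nat.card {x : H // p x} = Nat.card {y : K // p y} := by
  obtain ⟨f, hf⟩ := hHK
  exact Nat.card_congr (f.subtypeEquiv fun x => hp _ _ (hf x))

theorem of_card_conjClasses_eq [Finite H] [Finite K]
    (h : ∀ c : ConjClasses G, Nat.card {x : H // ConjClasses.mk (x : G) = c} =
      Nat.card {y : K // ConjClasses.mk (y : G) = c}) :
    AlmostConjugate H K := by
  have e : ∀ c : ConjClasses G, {x : H // ConjClasses.mk (x : G) = c} ≃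
      {y : K // ConjClasses.mk (y : G) = c} := fun c => (Finite.card_eq.mp (h c)).some
  exact ⟨Equiv.ofFiberEquiv e,
    fun x => ConjClasses.mk_eq_mk_iff_isConj.mp (Equiv.ofFiberEquiv_map e x).symm⟩

end AlmostConjugate

/-- Almost conjugacy descends to quotients: if N ⊴ G is contained in both of
the almost conjugate subgroups H and K, then H/N and K/N are almost conjugate
in G/N. -/
theorem almostConjugate_quotient
    {G : Type*} [Group G] [Finite G] (H K N : Subgroup G) [N.Normal]
    (hNH : N ≤ H) (hNK : N ≤ K) (hHK : AlmostConjugate H K) :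
    AlmostConjugate (H.map (QuotientGroup.mk' N)) (K.map (QuotientGroup.mk' N)) := by
  refine AlmostConjugate.of_card_conjClasses_eq fun q =>
    Nat.eq_of_mul_eq_mul_left (Nat.card_pos (α := N)) ?_
  have hq : ∀ a b : G, IsConj a b →
      (ConjClasses.mk (a : G ⧸ N) = q ↔ ConjClasses.mk (b : G ⧸ N) = q) := fun a b hab =>
    Eq.congr_left (ConjClasses.mk_eq_mk_iff_isConj.mpr ((QuotientGroup.mk' N).map_isConj hab))
  calc _ = Nat.card {x : H // ConjClasses.mk (x : G ⧸ N) = q} :=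
        (Subgroup.card_subtype_mk_eq_card_mul_card_map hNH (ConjClasses.mk · = q)).symm
    _ = Nat.card {y : K // ConjClasses.mk (y : G ⧸ N) = q} := hHK.card_subtype_eq hq
    _ = _ := Subgroup.card_subtype_mk_eq_card_mul_card_map hNK (ConjClasses.mk · = q)
end
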